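/- arXiv:1509.04317 — 4 statements merged into one kernel-verified Lean document; each statement's English description precedes it below -/
import Mathlib

section
/- For real numbers $t$ and $a$ with $|t| < a$ and any real $u$, the function $e^t(1 - t/a)^u$ equals $\sum_{k=0}^{\infty} C_k^{(a)}(u) \frac{t^k}{k!}$, where $C_k^{(a)}(u) = \sum_{r=0}^{k} \binom{k}{r} (-u)_r (1/a)^r$ and $(\alpha)_r$ denotes the rising factorial (Pochhammer symbol). -/
/-! The binomial series `(1 - x)^u = ∑ (-1)^r binom(u, r) x^r` converges absolutely for `|x| < 1`,
and `(-1)^r binom(u, r) = (-u)_r / r!`. Multiplying it at `x = t / a` by the exponential series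
of `e^t` (a Cauchy product), the `k`-th coefficient is `C_k^{(a)}(u) / k!`. -/

/-- Charlier polynomial `C_k^{(a)}(u) = ∑_{r=0}^k (k choose r) (-u)_r (1/a)^r`,
where `(α)_r` is the rising factorial (Pochhammer symbol). -/
noncomputable def charlier (a u : ℝ) (k : ℕ) : ℝ :=
  ∑ r ∈ Finset.range (k + 1),
    (k.choose r : ℝ) * (ascPochhammer ℝ r).eval (-u) * (1 / a) ^ r

open Finset Nat Polynomial

theorem Ring.choose_mul_neg_one_pow {K : Type*} [Field K] [CharZero K] (u : K) (n : ℕ) :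
    Ring.choose u n * (-1) ^ n = (ascPochhammer K n).eval (-u) / n ! := by
  rw [Ring.choose_eq_smul, descPochhammer_smeval_eq_ascPochhammer, ascPochhammer_smeval_eq_eval,
    ← descPochhammer_eval_eq_ascPochhammer, ascPochhammer_eval_neg_eq_descPochhammer, smul_eq_mul]
  field_simp

theorem binomialSeries_apply_neg {K : Type*} [Field K] [CharZero K] [TopologicalSpace K]
    [IsTopologicalRing K] (u y : K) (n : ℕ) :
    binomialSeries K u n (fun _ => -y) = (ascPochhammer K n).eval (-u) / n ! * y ^ n := by
  rw [binomialSeries_apply, List.ofFn_const, List.prod_replicate, smul_eq_mul, neg_pow,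
    ← Ring.choose_mul_neg_one_pow]
  ring

namespace Real

theorem hasSum_one_sub_rpow (u : ℝ) {x : ℝ} (hx : |x| < 1) :
    HasSum (fun n => (ascPochhammer ℝ n).eval (-u) / n ! * x ^ n) ((1 - x) ^ u) := by
  have hmem : -x ∈ Metric.eball (0 : ℝ) 1 := by
    simpa [enorm_eq_nnnorm, ← NNReal.coe_lt_coe] using hx
  have h := (one_add_rpow_hasFPowerSeriesOnBall_zero (a := u)).hasSum hmem
  rw [zero_add, ← sub_eq_add_neg] at h
  simpa only [binomialSeries_apply_neg] using h

theorem summable_norm_ascPochhammer_neg_div_factorial_mul_pow (u : ℝ) {x : ℝ} (hx : |x| < 1) :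
    Summable fun n => ‖(ascPochhammer ℝ n).eval (-u) / n ! * x ^ n‖ := by
  have hmem : -x ∈ Metric.eball (0 : ℝ) (binomialSeries ℝ u).radius := by
    refine Metric.eball_subset_eball binomialSeries_radius_ge_one ?_
    simpa [enorm_eq_nnnorm, ← NNReal.coe_lt_coe] using hx
  have h := (binomialSeries ℝ u).summable_norm_apply hmem
  simpa only [binomialSeries_apply_neg] using h

end Real

theorem charlier_mul_pow_div_factorial (a u t : ℝ) (k : ℕ) :
    charlier a u k * t ^ k / k ! = ∑ p ∈ antidiagonal k,
      (ascPochhammer ℝ p.1).eval (-u) / p.1 ! * (t / a) ^ p.1 * (t ^ p.2 / p.2 !) := by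
  rw [Nat.sum_antidiagonal_eq_sum_range_succ (fun i j =>
      (ascPochhammer ℝ i).eval (-u) / i ! * (t / a) ^ i * (t ^ j / j !)), charlier,
    sum_mul, sum_div]
  refine sum_congr rfl fun r hr => ?_
  have hrk : r ≤ k := Nat.lt_succ_iff.mp (mem_range.mp hr)
  rw [Nat.cast_choose ℝ hrk, ← pow_sub_mul_pow t hrk, div_eq_mul_one_div t a, mul_pow]
  field_simp

/-- Generating function of the Charlier polynomials:
`e^t (1 - t/a)^u = ∑_{k=0}^∞ C_k^{(a)}(u) t^k / k!` for `|t| < a`. -/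
theorem charlier_generating_function (t a u : ℝ) (ht : |t| < a) :
    Real.exp t * (1 - t / a) ^ u =
      ∑' k : ℕ, charlier a u k * t ^ k / (Nat.factorial k : ℝ) := by
  have hta : |t / a| < 1 := by
    have ha : 0 < a := (abs_nonneg t).trans_lt ht
    rwa [abs_div, abs_of_pos ha, div_lt_one ha]
  rw [mul_comm, ← (Real.hasSum_one_sub_rpow u hta).tsum_eq, Real.exp_eq_exp_ℝ,
    ← (NormedSpace.expSeries_div_hasSum_exp t).tsum_eq,
    tsum_mul_tsum_eq_tsum_sum_antidiagonal_of_summable_norm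
      (Real.summable_norm_ascPochhammer_neg_div_factorial_mul_pow u hta)
      (NormedSpace.norm_expSeries_div_summable t)]
  simp only [charlier_mul_pow_div_factorial]
end

section
/- For $a > 1$, $n \geq 1$, $0 \leq \alpha \leq \beta$, and $x \geq 0$ large enough that $r^*_{n,a}(x;\alpha,\beta) \geq 0$, the first moment of the Kantorovich operator is $K_{n,a}^{\alpha,\beta}(t; x) = \frac{-(1+\frac{1}{a-1}) + \sqrt{(4+2\alpha+\frac{1}{a-1})^2 + 4((n+\beta)^2 x^2 - \frac{10}{3} - 3\alpha - \alpha^2)}}{2(n+\beta)}$. -/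
/-- The radicand appearing in the definition of `rstar`. -/
noncomputable def radicand (a α β x : ℝ) (n : ℕ) : ℝ :=
  (4 + 2 * α + 1 / (a - 1)) ^ 2 + 4 * (((n : ℝ) + β) ^ 2 * x ^ 2 - 10 / 3 - 3 * α - α ^ 2)

/-- The function `r*_{n,a}(x; α, β)`. -/
noncomputable def rstar (a α β x : ℝ) (n : ℕ) : ℝ :=
  (-(4 + 2 * α + 1 / (a - 1)) + Real.sqrt (radicand a α β x n)) / (2 * n)

/-- The Kantorovich-Charlier operator `K_{n,a}^{α,β}(f; x)`. -/
noncomputable def K (a α β : ℝ) (n : ℕ) (f : ℝ → ℝ) (x : ℝ) : ℝ :=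
  ((n : ℝ) + β) * Real.exp (-1) * (1 - 1 / a) ^ ((a - 1) * n * rstar a α β x n) *
    ∑' k : ℕ, charlier a (-(a - 1) * n * rstar a α β x n) k / (Nat.factorial k : ℝ) *
      ∫ s in ((k + α) / ((n : ℝ) + β))..((k + α + 1) / ((n : ℝ) + β)), f s

/-!
Splitting the binomial coefficient in `charlier` exhibits `C_k^{(a)}(u) / k!` as the Cauchy
product of the binomial series `∑ (-u)_r a^{-r} / r! = (1 - 1/a)^u` with the exponential series of
`e`. Hence `∑ C_k / k! = e (1 - 1/a)^u`, and weighting the `(r, m)` term by `k = r + m` gives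
`∑ k C_k / k! = e (1 - 1/a)^u (1 - u / (a - 1))`. The integral of `s` over
`[(k+α)/(n+β), (k+α+1)/(n+β)]` is `(2k + 2α + 1) / (2 (n+β)^2)`, so `K(t; x)` collapses to
`(2 n r* + 2α + 3) / (2 (n+β))`, and the definition of `r*` finishes the computation.
-/

open Finset Real Nat

noncomputable def binomialTerm (v t : ℝ) (r : ℕ) : ℝ := (ascPochhammer ℝ r).eval v / r ! * t ^ r

theorem ascPochhammer_eval_div_factorial (v : ℝ) (r : ℕ) :
    (ascPochhammer ℝ r).eval v / r ! = Ring.choose (v + r - 1) r := by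
  rw [← Ring.multichoose_eq, eq_comm, eq_div_iff (by positivity), mul_comm,
    ← nsmul_eq_mul, Ring.factorial_nsmul_multichoose_eq_ascPochhammer,
    Polynomial.ascPochhammer_smeval_eq_eval]

lemma mem_eball_one_of_abs_lt_one {t : ℝ} (ht : |t| < 1) : t ∈ Metric.eball (0 : ℝ) 1 := by
  simpa [Metric.mem_eball, edist_zero_right, enorm_eq_nnnorm, ← NNReal.coe_lt_coe] using ht

theorem hasSum_binomialTerm (v : ℝ) {t : ℝ} (ht : |t| < 1) :
    HasSum (binomialTerm v t) ((1 - t) ^ (-v)) := by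
  have h := (one_div_one_sub_rpow_hasFPowerSeriesOnBall_zero v).hasSum
    (mem_eball_one_of_abs_lt_one ht)
  simp only [FormalMultilinearSeries.ofScalars_apply_eq, smul_eq_mul, zero_add] at h
  rw [rpow_neg (by linarith [le_abs_self t]), ← one_div]
  unfold binomialTerm
  simpa only [ascPochhammer_eval_div_factorial] using h

theorem summable_norm_binomialTerm (v : ℝ) {t : ℝ} (ht : |t| < 1) :
    Summable fun r => ‖binomialTerm v t r‖ := by
  have h := FormalMultilinearSeries.summable_norm_apply _ <| Metric.eball_subset_eball
    (one_div_one_sub_rpow_hasFPowerSeriesOnBall_zero v).r_le (mem_eball_one_of_abs_lt_one ht)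
  simpa only [FormalMultilinearSeries.ofScalars_apply_eq, smul_eq_mul, binomialTerm,
    ascPochhammer_eval_div_factorial] using h

theorem succ_mul_binomialTerm_succ (v t : ℝ) (r : ℕ) :
    ((r : ℝ) + 1) * binomialTerm v t (r + 1) = v * t * binomialTerm (v + 1) t r := by
  have hpoch : (ascPochhammer ℝ (r + 1)).eval v = v * (ascPochhammer ℝ r).eval (v + 1) := by
    simp [ascPochhammer_succ_left, Polynomial.eval_comp]
  rw [binomialTerm, binomialTerm, hpoch, factorial_succ, pow_succ]
  push_cast
  field_simp

theorem hasSum_mul_binomialTerm (v : ℝ) {t s : ℝ} (h : HasSum (binomialTerm (v + 1) t) s) :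
    HasSum (fun r : ℕ => r * binomialTerm v t r) (v * t * s) := by
  refine (hasSum_nat_add_iff' 1).mp ?_
  simpa only [Nat.cast_succ, succ_mul_binomialTerm_succ, range_one, sum_singleton, Nat.cast_zero,
    zero_mul, sub_zero] using h.mul_left (v * t)

theorem summable_norm_mul_binomialTerm (v : ℝ) {t : ℝ}
    (h : Summable fun r => ‖binomialTerm (v + 1) t r‖) :
    Summable fun r : ℕ => ‖r * binomialTerm v t r‖ := by
  refine (summable_nat_add_iff 1).mp ?_
  simpa only [Nat.cast_succ, succ_mul_binomialTerm_succ, norm_mul] using h.mul_left ‖v * t‖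

theorem hasSum_inv_factorial : HasSum (fun m : ℕ => (m ! : ℝ)⁻¹) (exp 1) := by
  simpa [exp_eq_exp_ℝ] using NormedSpace.expSeries_div_hasSum_exp (1 : ℝ)

theorem hasSum_mul_inv_factorial : HasSum (fun m : ℕ => m * (m ! : ℝ)⁻¹) (exp 1) := by
  have hshift (m : ℕ) : ((m + 1 : ℕ) : ℝ) * ((m + 1)! : ℝ)⁻¹ = (m ! : ℝ)⁻¹ := by
    rw [factorial_succ, Nat.cast_mul, mul_inv, mul_inv_cancel_left₀ (by positivity)]
  refine (hasSum_nat_add_iff' 1).mp ?_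
  simpa only [hshift, range_one, sum_singleton, Nat.cast_zero, zero_mul, sub_zero] using
    hasSum_inv_factorial

theorem HasSum.sum_antidiagonal_mul_of_summable_norm {R : Type*} [NormedRing R] [CompleteSpace R]
    {f g : ℕ → R} {s u : R} (hf : HasSum f s) (hg : HasSum g u)
    (hf' : Summable fun n => ‖f n‖) (hg' : Summable fun n => ‖g n‖) :
    HasSum (fun n => ∑ kl ∈ antidiagonal n, f kl.1 * g kl.2) (s * u) := by
  rw [← hf.tsum_eq, ← hg.tsum_eq, tsum_mul_tsum_eq_tsum_sum_antidiagonal_of_summable_norm hf' hg']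
  exact (summable_norm_sum_mul_antidiagonal_of_summable_norm hf' hg').of_norm.hasSum

theorem charlier_div_factorial (a u : ℝ) (k : ℕ) :
    charlier a u k / k ! =
      ∑ rm ∈ antidiagonal k, binomialTerm (-u) (1 / a) rm.1 * (rm.2 ! : ℝ)⁻¹ := by
  rw [Nat.sum_antidiagonal_eq_sum_range_succ_mk, charlier, sum_div]
  refine sum_congr rfl fun r hr => ?_
  rw [Nat.cast_choose ℝ (Nat.lt_succ_iff.mp (mem_range.mp hr)), binomialTerm]
  field_simp

lemma abs_one_div_lt_one {a : ℝ} (ha : 1 < |a|) : |1 / a| < 1 := by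
  rwa [abs_div, abs_one, div_lt_one (by linarith)]

lemma sub_one_ne_zero_of_one_lt_abs {a : ℝ} (ha : 1 < |a|) : a - 1 ≠ 0 :=
  sub_ne_zero.mpr fun h => by rw [h, abs_one] at ha; exact ha.false

theorem hasSum_charlier_div_factorial {a : ℝ} (ha : 1 < |a|) (u : ℝ) :
    HasSum (fun k => charlier a u k / k !) ((1 - 1 / a) ^ u * exp 1) := by
  have ht := abs_one_div_lt_one ha
  simp_rw [charlier_div_factorial]
  simpa only [neg_neg] using
    (hasSum_binomialTerm (-u) ht).sum_antidiagonal_mul_of_summable_norm hasSum_inv_factorial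
      (summable_norm_binomialTerm (-u) ht) (summable_norm_iff.mpr hasSum_inv_factorial.summable)

theorem hasSum_mul_charlier_div_factorial {a : ℝ} (ha : 1 < |a|) (u : ℝ) :
    HasSum (fun k => k * (charlier a u k / k !))
      ((1 - 1 / a) ^ u * exp 1 * (1 - u / (a - 1))) := by
  have ht := abs_one_div_lt_one ha
  have hleft := (hasSum_mul_binomialTerm (-u) (hasSum_binomialTerm (-u + 1) ht)
    ).sum_antidiagonal_mul_of_summable_norm hasSum_inv_factorial
    (summable_norm_mul_binomialTerm (-u) (summable_norm_binomialTerm _ ht))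
    (summable_norm_iff.mpr hasSum_inv_factorial.summable)
  have hright := (hasSum_binomialTerm (-u) ht).sum_antidiagonal_mul_of_summable_norm
    hasSum_mul_inv_factorial (summable_norm_binomialTerm _ ht)
    (summable_norm_iff.mpr hasSum_mul_inv_factorial.summable)
  have hterm : (fun k : ℕ => k * (charlier a u k / k !)) = fun k =>
      ∑ rm ∈ antidiagonal k, rm.1 * binomialTerm (-u) (1 / a) rm.1 * (rm.2 ! : ℝ)⁻¹ +
      ∑ rm ∈ antidiagonal k, binomialTerm (-u) (1 / a) rm.1 * (rm.2 * (rm.2 ! : ℝ)⁻¹) := by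
    ext k
    rw [charlier_div_factorial, mul_sum, ← sum_add_distrib]
    refine sum_congr rfl fun rm hrm => ?_
    rw [← mem_antidiagonal.mp hrm]
    push_cast
    ring
  have ha0 : a ≠ 0 := abs_pos.mp (by linarith)
  have ha1 := sub_one_ne_zero_of_one_lt_abs ha
  have h1t : 1 - 1 / a ≠ 0 := by
    rw [one_sub_div ha0]
    exact div_ne_zero ha1 ha0
  have hvalue : (1 - 1 / a) ^ u * exp 1 * (1 - u / (a - 1)) =
      -u * (1 / a) * (1 - 1 / a) ^ (-(-u + 1)) * exp 1 + (1 - 1 / a) ^ (- -u) * exp 1 := by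
    rw [show -(-u + 1) = u - 1 by ring, rpow_sub_one h1t, neg_neg]
    field_simp
    ring
  rw [hterm, hvalue]
  exact hleft.add hright

theorem integral_id_div_add_one_div (c d : ℝ) :
    ∫ s in (c / d)..((c + 1) / d), s = (2 * c + 1) / (2 * d ^ 2) := by
  rw [integral_id]
  ring

theorem K_id_eq (a α β x : ℝ) (n : ℕ) (ha : 1 < |a|) :
    K a α β n (fun t => t) x = (2 * n * rstar a α β x n + 2 * α + 3) / (2 * (n + β)) := by
  rcases eq_or_ne ((n : ℝ) + β) 0 with hnβ | hnβ
  · simp [K, hnβ] -- both sides vanish, the right one through division by zero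
  set u := -(a - 1) * n * rstar a α β x n with hu
  have hsum : HasSum (fun k : ℕ => charlier a u k / k ! *
      ∫ s in ((k + α) / ((n : ℝ) + β))..((k + α + 1) / ((n : ℝ) + β)), s)
      ((2 * ((1 - 1 / a) ^ u * exp 1 * (1 - u / (a - 1))) + (2 * α + 1) * ((1 - 1 / a) ^ u * exp 1))
        / (2 * ((n : ℝ) + β) ^ 2)) := by
    have hterm (k : ℕ) : charlier a u k / k ! * ((2 * (k + α) + 1) / (2 * ((n : ℝ) + β) ^ 2)) =
        (2 * (k * (charlier a u k / k !)) + (2 * α + 1) * (charlier a u k / k !)) /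
          (2 * ((n : ℝ) + β) ^ 2) := by
      ring
    simp_rw [integral_id_div_add_one_div, hterm]
    exact (((hasSum_mul_charlier_div_factorial ha u).mul_left 2).add
      ((hasSum_charlier_div_factorial ha u).mul_left (2 * α + 1))).div_const _
  have ha1 := sub_one_ne_zero_of_one_lt_abs ha
  have hbase : 0 < 1 - 1 / a := by linarith [le_abs_self (1 / a), abs_one_div_lt_one ha]
  rw [K, hsum.tsum_eq, show (a - 1) * n * rstar a α β x n = -u by ring, rpow_neg hbase.le,
    exp_neg, hu]
  field_simp
  ring

theorem two_mul_mul_rstar (a α β x : ℝ) {n : ℕ} (hn : n ≠ 0) :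
    2 * n * rstar a α β x n = -(4 + 2 * α + 1 / (a - 1)) + √(radicand a α β x n) := by
  rw [rstar]
  field_simp

theorem K_first_moment_general (a α β x : ℝ) (n : ℕ) (ha : 1 < a) (hn : 1 ≤ n) :
    K a α β n (fun t => t) x =
      (-(1 + 1 / (a - 1)) + Real.sqrt (radicand a α β x n)) / (2 * ((n : ℝ) + β)) := by
  rw [K_id_eq a α β x n (ha.trans_le (le_abs_self a)), two_mul_mul_rstar a α β x (by omega)]
  ring

/-- First moment of the Kantorovich-Charlier operator. -/
theorem K_first_moment (a α β x : ℝ) (n : ℕ) (ha : 1 < a) (hn : 1 ≤ n)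
    (hα : 0 ≤ α) (hαβ : α ≤ β) (hx : 0 ≤ x) (hr : 0 ≤ rstar a α β x n) :
    K a α β n (fun t => t) x =
      (-(1 + 1 / (a - 1)) + Real.sqrt (radicand a α β x n)) / (2 * ((n : ℝ) + β)) :=
  K_first_moment_general a α β x n ha hn
end

section
/- Let $L$ be a positive linear operator with $L(1;x)=1$ and let $0 < \alpha < 1$. If $f$ satisfies $|f(t)-f(x)| \leq M \frac{|t-x|^\alpha}{(t+x)^{\alpha/2}}$ for all $t,x > 0$, then for every $x > 0$, $|L(f;x) - f(x)| \leq M \left(\frac{L((t-x)^2; x)}{x}\right)^{\alpha/2}$. -/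
lemma rpow_le_lin (u ε p : ℝ) (hu : 0 ≤ u) (hε : 0 < ε) (hp0 : 0 < p) (hp1 : p < 1) :
    u ^ p ≤ p * ε ^ (p - 1) * u + (1 - p) * ε ^ p := by
  have key := Real.geom_mean_le_arith_mean2_weighted hp0.le (by linarith) hu hε.le
    (by ring : p + (1 - p) = 1)
  have hεp : (0:ℝ) ≤ ε ^ (p - 1) := (Real.rpow_pos_of_pos hε _).le
  calc u ^ p = (u ^ p * ε ^ (1 - p)) * ε ^ (p - 1) := by
        rw [mul_assoc, ← Real.rpow_add hε]; norm_num
    _ ≤ (p * u + (1 - p) * ε) * ε ^ (p - 1) := mul_le_mul_of_nonneg_right key hεp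
    _ = p * ε ^ (p - 1) * u + (1 - p) * (ε ^ (1:ℝ) * ε ^ (p - 1)) := by
        rw [Real.rpow_one]; ring
    _ = p * ε ^ (p - 1) * u + (1 - p) * ε ^ p := by
        rw [← Real.rpow_add hε]; norm_num

/-- The 0 < α < 1 case of Theorem 4.3 for the Lipschitz-type class `Lip*_M(α)`. -/
theorem lipschitz_alpha_estimate (L : (ℝ → ℝ) → ℝ → ℝ)
    (hadd : ∀ f g : ℝ → ℝ, ∀ x : ℝ, L (f + g) x = L f x + L g x)
    (hsmul : ∀ c : ℝ, ∀ f : ℝ → ℝ, ∀ x : ℝ, L (fun t => c * f t) x = c * L f x)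
    (hpos : ∀ f : ℝ → ℝ, (∀ t, 0 < t → 0 ≤ f t) → ∀ x, 0 < x → 0 ≤ L f x)
    (hone : ∀ x : ℝ, L (fun _ => 1) x = 1)
    (α : ℝ) (hα0 : 0 < α) (hα1 : α < 1)
    (f : ℝ → ℝ) (M : ℝ)
    (hf : ∀ t x : ℝ, 0 < t → 0 < x → |f t - f x| ≤ M * |t - x| ^ α / (t + x) ^ (α / 2))
    (x : ℝ) (hx : 0 < x) :
    |L f x - f x| ≤ M * (L (fun t => (t - x) ^ 2) x / x) ^ (α / 2) := by
  set p : ℝ := α / 2 with hp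
  have hp0 : 0 < p := by positivity
  have hp1 : p < 1 := by rw [hp]; linarith
  set S : ℝ := L (fun t => (t - x) ^ 2) x with hS
  have hS0 : 0 ≤ S := hpos _ (fun t _ => sq_nonneg _) x hx
  have hxp : (0:ℝ) < x ^ p := Real.rpow_pos_of_pos hx p
  -- M ≥ 0
  have hM : 0 ≤ M := by
    have h1 := (abs_nonneg (f (2 * x) - f x)).trans (hf (2 * x) x (by linarith) hx)
    have h2 : (0:ℝ) < |2 * x - x| ^ α := by
      rw [show |2 * x - x| = x by rw [abs_of_pos]; ring; linarith]
      exact Real.rpow_pos_of_pos hx α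
    have h3 : (0:ℝ) < (2 * x + x) ^ p := Real.rpow_pos_of_pos (by linarith) p
    rcases div_nonneg_iff.1 h1 with ⟨ha, _⟩ | ⟨_, hb⟩
    · by_contra hM'
      push_neg at hM'
      nlinarith [mul_neg_of_neg_of_pos hM' h2]
    · linarith
  -- monotonicity of L
  have hmono : ∀ g h : ℝ → ℝ, (∀ t, 0 < t → g t ≤ h t) → L g x ≤ L h x := by
    intro g h hgh
    have h0 := hpos (fun t => h t + (-1) * g t) (fun t ht => by
      have := hgh t ht; simp; linarith) x hx
    have heq : L (fun t => h t + (-1) * g t) x = L h x - L g x := by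
      have h1 : (fun t => h t + (-1) * g t) = h + (fun t => (-1) * g t) := by
        funext t; simp
      rw [h1, hadd, hsmul]; ring
    linarith [heq ▸ h0]
  -- L of affine-in-(t-x)^2 functions
  have hL2 : ∀ a b : ℝ, L (fun t => a * (t - x) ^ 2 + b) x = a * S + b := by
    intro a b
    have h1 : (fun t => a * (t - x) ^ 2 + b)
        = (fun t => a * (t - x) ^ 2) + (fun t => b * 1) := by
      funext t; simp
    rw [h1, hadd, hsmul a (fun t => (t - x) ^ 2), hsmul b (fun _ => 1), hone, ← hS]; ring
  have hLsub : L (fun t => f t - f x) x = L f x - f x := by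
    have h1 : (fun t => f t - f x) = f + (fun t => (-(f x)) * 1) := by
      funext t; simp; ring
    rw [h1, hadd, hsmul, hone]; ring
  -- key estimate for every ε > 0
  have hkey : ∀ ε : ℝ, 0 < ε →
      |L f x - f x| ≤ (M / x ^ p) * (p * ε ^ (p - 1) * S + (1 - p) * ε ^ p) := by
    intro ε hε
    have hpt : ∀ t, 0 < t → |f t - f x| ≤
        (M / x ^ p * (p * ε ^ (p - 1))) * (t - x) ^ 2 + (M / x ^ p * ((1 - p) * ε ^ p)) := by
      intro t ht
      have h1 := hf t x ht hx
      have h2 : M * |t - x| ^ α / (t + x) ^ p ≤ M * |t - x| ^ α / x ^ p := by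
        apply div_le_div_of_nonneg_left _ hxp
        · exact Real.rpow_le_rpow hx.le (by linarith) hp0.le
        · positivity
      have h3 : |t - x| ^ α = ((t - x) ^ 2) ^ p := by
        rw [← sq_abs, ← Real.rpow_natCast |t - x| 2, ← Real.rpow_mul (abs_nonneg _)]
        norm_num [hp]; ring_nf
      have h4 := rpow_le_lin ((t - x) ^ 2) ε p (sq_nonneg _) hε hp0 hp1
      have h5 : M * |t - x| ^ α / x ^ p
          ≤ (M / x ^ p) * (p * ε ^ (p - 1) * (t - x) ^ 2 + (1 - p) * ε ^ p) := by
        rw [h3]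
        rw [div_eq_mul_inv, div_eq_mul_inv]
        have : M * ((t - x) ^ 2) ^ p * (x ^ p)⁻¹ = (M * (x ^ p)⁻¹) * ((t - x) ^ 2) ^ p := by ring
        rw [this]
        have hMx : 0 ≤ M * (x ^ p)⁻¹ := by positivity
        nlinarith [mul_le_mul_of_nonneg_left h4 hMx]
      calc |f t - f x| ≤ M * |t - x| ^ α / (t + x) ^ p := h1
        _ ≤ M * |t - x| ^ α / x ^ p := h2
        _ ≤ (M / x ^ p) * (p * ε ^ (p - 1) * (t - x) ^ 2 + (1 - p) * ε ^ p) := h5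
        _ = (M / x ^ p * (p * ε ^ (p - 1))) * (t - x) ^ 2
            + (M / x ^ p * ((1 - p) * ε ^ p)) := by ring
    rw [← hLsub]
    rw [abs_le]
    constructor
    · have hup := hmono (fun t => (-(M / x ^ p * (p * ε ^ (p - 1)))) * (t - x) ^ 2
          + (-(M / x ^ p * ((1 - p) * ε ^ p)))) (fun t => f t - f x) (fun t ht => by
        have := hpt t ht
        have := neg_abs_le (f t - f x)
        nlinarith)
      rw [hL2] at hup
      linarith
    · have hup := hmono (fun t => f t - f x) (fun t => (M / x ^ p * (p * ε ^ (p - 1))) * (t - x) ^ 2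
          + (M / x ^ p * ((1 - p) * ε ^ p))) (fun t ht => by
        have := hpt t ht
        have := le_abs_self (f t - f x)
        linarith)
      rw [hL2] at hup
      linarith
  -- conclude
  rcases eq_or_lt_of_le hS0 with hS0' | hSpos
  · -- S = 0
    rw [← hS0', zero_div, Real.zero_rpow (by positivity : p ≠ 0), mul_zero]
    refine le_of_forall_pos_le_add ?_
    intro δ hδ
    set K : ℝ := (M / x ^ p) * (1 - p) with hK
    have hK0 : 0 ≤ K := by
      apply mul_nonneg (by positivity) (by linarith)
    set ε : ℝ := (δ / (K + 1)) ^ (1 / p) with hε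
    have hεpos : 0 < ε := Real.rpow_pos_of_pos (by positivity) _
    have hεp : ε ^ p = δ / (K + 1) := by
      rw [hε, ← Real.rpow_mul (by positivity : (0:ℝ) ≤ δ / (K + 1)), one_div,
        inv_mul_cancel₀ (ne_of_gt hp0), Real.rpow_one]
    have := hkey ε hεpos
    rw [← hS0'] at this
    have h6 : (M / x ^ p) * (p * ε ^ (p - 1) * 0 + (1 - p) * ε ^ p) = K * (δ / (K + 1)) := by
      rw [hεp]; ring
    rw [h6] at this
    have h7 : K * (δ / (K + 1)) ≤ δ := by
      rw [div_eq_mul_inv]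
      have hK1 : (0:ℝ) < K + 1 := by linarith
      rw [mul_comm δ, ← mul_assoc]
      have : K * (K + 1)⁻¹ ≤ 1 := by
        rw [mul_inv_le_iff₀ hK1]; linarith
      nlinarith
    linarith
  · -- S > 0
    have := hkey S hSpos
    have hSp : p * S ^ (p - 1) * S + (1 - p) * S ^ p = S ^ p := by
      have : S ^ (p - 1) * S = S ^ p := by
        nth_rewrite 2 [← Real.rpow_one S]
        rw [← Real.rpow_add hSpos]; ring_nf
      nlinarith [this]
    rw [hSp] at this
    have hdiv : (S / x) ^ p = S ^ p / x ^ p := Real.div_rpow hS0 hx.le p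
    rw [hdiv]
    calc |L f x - f x| ≤ M / x ^ p * S ^ p := this
      _ = M * (S ^ p / x ^ p) := by ring
end

section
/- For fixed $a > 1$ and $0 \leq \alpha \leq \beta$, $\lim_{n\to\infty} \sup_{x \in [0,\infty)} \frac{|K_{n,a}^{\alpha,\beta}(t;x) - x|}{1+x^2} = 0$; that is, the first moments of the Kantorovich-Charlier operators converge to the identity in the polynomial weighted norm with weight $\rho(x) = 1+x^2$. -/
private lemma aux_bound (b c d t N x s : ℝ) (hb : 0 < b) (hc : 0 < c) (hd : 0 < d)
    (ht0 : 0 ≤ t) (ht2 : t ^ 2 = d) (hN : 1 ≤ N) (hx : 0 ≤ x) (hs0 : 0 ≤ s)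
    (hs2 : s ^ 2 = c ^ 2 + 4 * (N ^ 2 * x ^ 2 - d)) :
    |(-b + s) / (2 * N) - x| / (1 + x ^ 2) ≤ (b + c + 2 * t) / (2 * N) := by
  have hNpos : 0 < N := lt_of_lt_of_le one_pos hN
  have h2N : (2 * N) ≠ 0 := by positivity
  -- upper bound on s
  have hub : s ≤ c + 2 * N * x := by
    have hpos : 0 ≤ c + 2 * N * x := by positivity
    nlinarith [mul_nonneg (mul_nonneg hc.le hNpos.le) hx, sq_nonneg (s - (c + 2 * N * x))]
  -- lower bound on s
  have hlb : 2 * N * x - 2 * t ≤ s := by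
    rcases le_or_gt (2 * N * x) (2 * t) with h | h
    · linarith
    · have htNx : t ≤ N * x := by linarith
      have hmul : t * t ≤ t * (N * x) := mul_le_mul_of_nonneg_left htNx ht0
      nlinarith [sq_nonneg c, sq_nonneg (s - (2 * N * x - 2 * t))]
  have heq : (-b + s) / (2 * N) - x = (-b + s - 2 * N * x) / (2 * N) := by
    rw [eq_div_iff h2N, sub_mul, div_mul_cancel₀ _ h2N]; ring
  have habs : |(-b + s) / (2 * N) - x| ≤ (b + c + 2 * t) / (2 * N) := by
    rw [heq, abs_div, abs_of_pos (by positivity : (0:ℝ) < 2 * N)]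
    apply div_le_div_of_nonneg_right _ (by positivity)
    rw [abs_le]
    constructor <;> linarith
  have hx2 : (1 : ℝ) ≤ 1 + x ^ 2 := by nlinarith
  calc |(-b + s) / (2 * N) - x| / (1 + x ^ 2)
      ≤ |(-b + s) / (2 * N) - x| := div_le_self (abs_nonneg _) hx2
    _ ≤ (b + c + 2 * t) / (2 * N) := habs

/-- Convergence of the first moments to the identity in the weighted norm
with weight ρ(x) = 1 + x², the supremum being taken over admissible x. -/
theorem K_first_moment_weighted_convergence (a α β : ℝ) (ha : 1 < a)
    (hα : 0 ≤ α) (hαβ : α ≤ β) :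
    Filter.Tendsto (fun n : ℕ =>
      sSup {v : ℝ | ∃ x : ℝ, 0 ≤ x ∧ 0 ≤ radicand a α β x n ∧
        v = |(-(1 + 1 / (a - 1)) + Real.sqrt (radicand a α β x n)) / (2 * ((n : ℝ) + β)) - x| /
              (1 + x ^ 2)})
      Filter.atTop (nhds 0) := by
  have ha1 : 0 < a - 1 := by linarith
  have hβ : 0 ≤ β := le_trans hα hαβ
  have hia : 0 < 1 / (a - 1) := one_div_pos.mpr ha1
  have hbpos : (0:ℝ) < 1 + 1 / (a - 1) := by linarith
  have hcpos : (0:ℝ) < 4 + 2 * α + 1 / (a - 1) := by linarith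
  have hdpos : (0:ℝ) < 10 / 3 + 3 * α + α ^ 2 := by positivity
  set t : ℝ := Real.sqrt (10 / 3 + 3 * α + α ^ 2) with htdef
  have ht0 : 0 ≤ t := Real.sqrt_nonneg _
  have ht2 : t ^ 2 = 10 / 3 + 3 * α + α ^ 2 := Real.sq_sqrt hdpos.le
  set M : ℝ := (1 + 1 / (a - 1)) + (4 + 2 * α + 1 / (a - 1)) + 2 * t with hM
  have hM0 : 0 ≤ M := by positivity
  apply squeeze_zero' (g := fun n : ℕ => M / (2 * ((n : ℝ) + β)))
  · filter_upwards with n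
    apply Real.sSup_nonneg
    rintro v ⟨x, hx, hrad, hveq⟩
    rw [hveq]; positivity
  · filter_upwards [Filter.eventually_ge_atTop 1] with n hn
    have hn1 : (1 : ℝ) ≤ (n : ℝ) := by exact_mod_cast hn
    apply Real.sSup_le
    · rintro v ⟨x, hx, hrad, hveq⟩
      rw [hveq]
      have hradeq : radicand a α β x n =
          (4 + 2 * α + 1 / (a - 1)) ^ 2 +
            4 * (((n : ℝ) + β) ^ 2 * x ^ 2 - (10 / 3 + 3 * α + α ^ 2)) := by
        simp only [radicand]; ring
      exact aux_bound (1 + 1 / (a - 1)) (4 + 2 * α + 1 / (a - 1)) (10 / 3 + 3 * α + α ^ 2)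
        t ((n : ℝ) + β) x (Real.sqrt (radicand a α β x n)) hbpos hcpos hdpos ht0 ht2
        (by linarith) hx (Real.sqrt_nonneg _) (by rw [Real.sq_sqrt hrad, hradeq])
    · positivity
  · apply Filter.Tendsto.div_atTop tendsto_const_nhds
    apply Filter.Tendsto.const_mul_atTop two_pos
    exact Filter.tendsto_atTop_add_const_right _ β tendsto_natCast_atTop_atTop
end
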